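/- arXiv:2202.02649 — 6 statements merged into one kernel-verified Lean document; each statement's English description precedes it below -/
import Mathlib

section
/- (Lemma: free parameters of two-layer GLNs, uniqueness) Let Γ̄ ⊆ {1,…,C}^H be the set of global contexts γ for which at most one coordinate h has γ_h ≠ 1. If two weight settings (w⁽¹⁾, w⁽²⁾) and (v⁽¹⁾, v⁽²⁾) of a two-layer GLN induce families of predictors β and β′ that agree on all γ ∈ Γ̄, then β_γ = β′_γ for every γ ∈ {1,…,C}^H. In other words, the restriction of the predictor family to Γ̄ uniquely determines all C^H predictors. -/
/-!
A predictor of a two-layer GLN is a sum of per-unit terms, `β γ = ∑ h, g h (γ h)`. For such a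
function, changing one coordinate of a base context `c` changes the value by exactly that
unit's term, so telescoping one coordinate at a time gives
`β γ = β c + ∑ h, (β (update c h (γ h)) - β c)`,
whose right-hand side only evaluates `β` on contexts differing from `c` in at most one
coordinate.
-/

open Finset

theorem Finset.card_filter_update_ne_le_one {ι κ : Type*} [Fintype ι] [DecidableEq ι]
    [DecidableEq κ] (c : ι → κ) (i : ι) (x : κ) :
    #{j | Function.update c i x j ≠ c j} ≤ 1 := by
  refine (card_le_card fun j hj => ?_).trans_eq (card_singleton i)
  by_contra hji
  exact (mem_filter.1 hj).2 (Function.update_of_ne (mem_singleton.not.1 hji) x c)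

namespace Fintype

variable {ι κ M : Type*} [Fintype ι] [DecidableEq ι] [AddCommGroup M]

theorem sum_apply_update_sub_sum_apply (g : ι → κ → M) (c : ι → κ) (i : ι) (x : κ) :
    ∑ j, g j (Function.update c i x j) - ∑ j, g j (c j) = g i x - g i (c i) := by
  rw [← sum_sub_distrib, sum_eq_single i fun j hj => by simp [Function.update_of_ne hj]]
  simp

theorem sum_apply_eq_add_sum_update (g : ι → κ → M) (c γ : ι → κ) :
    ∑ j, g j (γ j) =
      ∑ j, g j (c j) + ∑ i, (∑ j, g j (Function.update c i (γ i) j) - ∑ j, g j (c j)) := by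
  simp only [sum_apply_update_sub_sum_apply, sum_sub_distrib]
  abel

theorem sum_apply_eq_of_forall_update {g g' : ι → κ → M} (c : ι → κ)
    (hc : ∑ j, g j (c j) = ∑ j, g' j (c j))
    (hupdate : ∀ i x, ∑ j, g j (Function.update c i x j) = ∑ j, g' j (Function.update c i x j))
    (γ : ι → κ) : ∑ j, g j (γ j) = ∑ j, g' j (γ j) := by
  simp only [sum_apply_eq_add_sum_update _ c γ, hc, hupdate]

end Fintype

/-- **Free parameters of two-layer GLNs (uniqueness).** If two weight settings of a
two-layer GLN induce predictor families agreeing on all contexts with at most one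
coordinate different from the distinguished first context, then they agree on all
`C^H` contexts. -/
theorem gln_free_parameters_uniqueness
    (H C D : ℕ) [NeZero C]
    (w1 v1 : Fin H → Fin C → EuclideanSpace ℝ (Fin D)) (w2 v2 : Fin H → ℝ)
    (β β' : (Fin H → Fin C) → EuclideanSpace ℝ (Fin D))
    (hβ : ∀ γ, β γ = ∑ h, w2 h • w1 h (γ h))
    (hβ' : ∀ γ, β' γ = ∑ h, v2 h • v1 h (γ h))
    (hagree : ∀ γ : Fin H → Fin C,
      (Finset.univ.filter (fun h => γ h ≠ 0)).card ≤ 1 → β γ = β' γ) :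
    ∀ γ : Fin H → Fin C, β γ = β' γ := by
  intro γ
  rw [hβ, hβ']
  refine Fintype.sum_apply_eq_of_forall_update (g := fun h c => w2 h • w1 h c)
    (g' := fun h c => v2 h • v1 h c) 0 ?_ (fun i x => ?_) γ
  · simpa only [hβ, hβ'] using hagree 0 (by simp)
  · simpa only [hβ, hβ'] using hagree _ (card_filter_update_ne_le_one 0 i x)
end

section
/- (KKT transfer, forward direction) Let H, C, D be positive integers, Γ = {1,…,C}^H, and let φ: Γ → ℝ^D be any family of vectors. Suppose ŵ⁽¹⁾ ∈ ℝ^{H×C×D} and ŵ⁽²⁾ ∈ ℝ^H satisfy, for all h ∈ {1,…,H} and c ∈ {1,…,C}: ŵ⁽¹⁾_{hc} = ŵ⁽²⁾_h Σ_{γ ∈ Γ: γ_h=c} φ_γ and ŵ⁽²⁾_h = Σ_{c=1}^C ⟨ŵ⁽¹⁾_{hc}, Σ_{γ ∈ Γ: γ_h=c} φ_γ⟩. Define ζ_h := ŵ⁽²⁾_h ŵ⁽¹⁾_h ∈ ℝ^{C×D}. Then for all h and c: ζ_{hc} = ‖ζ_h‖₂ Σ_{γ ∈ Γ: γ_h=c}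 φ_γ. -/
/-!
Substituting the first KKT equation into the definition of `ζ` gives `ζ_{hc} = (ŵ⁽²⁾_h)² Φ_{hc}`,
where `Φ_{hc} = Σ_{γ_h = c} φ_γ`, and substituting it into the second gives
`ŵ⁽²⁾_h = ŵ⁽²⁾_h Σ_c ‖Φ_{hc}‖²`. Either `ŵ⁽²⁾_h = 0` and both sides vanish, or
`Σ_c ‖Φ_{hc}‖² = 1`, so that `‖ζ_h‖₂ = (ŵ⁽²⁾_h)²`.
-/

open Finset RealInnerProductSpace

section

variable {ι E : Type*} [Fintype ι]

theorem sqrt_sum_norm_smul_sq [SeminormedAddCommGroup E] [NormedSpace ℝ E] (a : ℝ) (v : ι → E) :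
    √(∑ i, ‖a • v i‖ ^ 2) = |a| * √(∑ i, ‖v i‖ ^ 2) := by
  simp_rw [norm_smul, mul_pow, ← mul_sum, Real.norm_eq_abs]
  rw [Real.sqrt_mul (sq_nonneg _), Real.sqrt_sq (abs_nonneg a)]

variable [NormedAddCommGroup E] [InnerProductSpace ℝ E]

theorem eq_zero_or_sum_norm_sq_eq_one {w : ℝ} {Φ : ι → E}
    (hw : w = ∑ i, ⟪w • Φ i, Φ i⟫) : w = 0 ∨ ∑ i, ‖Φ i‖ ^ 2 = 1 := by
  simp_rw [real_inner_smul_left, real_inner_self_eq_norm_sq, ← mul_sum] at hw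
  rcases eq_or_ne w 0 with h0 | h0
  · exact .inl h0
  · exact .inr (mul_left_cancel₀ h0 (by rw [mul_one]; exact hw.symm))

theorem sq_smul_eq_sqrt_sum_norm_sq_smul {w : ℝ} {Φ : ι → E}
    (hw : w = ∑ i, ⟪w • Φ i, Φ i⟫) (i : ι) :
    (w ^ 2) • Φ i = √(∑ j, ‖(w ^ 2) • Φ j‖ ^ 2) • Φ i := by
  rw [sqrt_sum_norm_smul_sq, abs_sq]
  rcases eq_zero_or_sum_norm_sq_eq_one hw with h0 | h1
  · simp [h0]
  · rw [h1, Real.sqrt_one, mul_one]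

end

theorem gln_kkt_transfer_forward_general
    (H C D : ℕ)
    (φ : (Fin H → Fin C) → EuclideanSpace ℝ (Fin D))
    (w1 : Fin H → Fin C → EuclideanSpace ℝ (Fin D)) (w2 : Fin H → ℝ)
    (hw1 : ∀ h c, w1 h c =
      w2 h • ∑ γ ∈ Finset.univ.filter (fun γ : Fin H → Fin C => γ h = c), φ γ)
    (hw2 : ∀ h, w2 h = ∑ c,
      ⟪w1 h c, ∑ γ ∈ Finset.univ.filter (fun γ : Fin H → Fin C => γ h = c), φ γ⟫)
    (ζ : Fin H → Fin C → EuclideanSpace ℝ (Fin D))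
    (hζ : ∀ h c, ζ h c = w2 h • w1 h c) :
    ∀ h c, ζ h c = Real.sqrt (∑ c', ‖ζ h c'‖ ^ 2) •
      ∑ γ ∈ Finset.univ.filter (fun γ : Fin H → Fin C => γ h = c), φ γ := by
  intro h c
  have hζ_sq : ∀ c', ζ h c' = (w2 h ^ 2) •
      ∑ γ ∈ Finset.univ.filter (fun γ : Fin H → Fin C => γ h = c'), φ γ := fun c' => by
    rw [hζ, hw1, smul_smul, sq]
  simp_rw [hζ_sq]
  exact sq_smul_eq_sqrt_sum_norm_sq_smul
    (Φ := fun c' => ∑ γ ∈ Finset.univ.filter (fun γ : Fin H → Fin C => γ h = c'), φ γ)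
    (by simpa only [hw1] using hw2 h) c

/-- **KKT transfer, forward direction.** If `(ŵ⁽¹⁾, ŵ⁽²⁾)` satisfy the weight-space KKT
equations for support-vector sums `φ`, then `ζ_h = ŵ⁽²⁾_h • ŵ⁽¹⁾_h` satisfies the
predictor-space KKT equation `ζ_{hc} = ‖ζ_h‖₂ Σ_{γ : γ_h = c} φ_γ`. -/
theorem gln_kkt_transfer_forward
    (H C D : ℕ) (hH : 0 < H) (hC : 0 < C) (hD : 0 < D)
    (φ : (Fin H → Fin C) → EuclideanSpace ℝ (Fin D))
    (w1 : Fin H → Fin C → EuclideanSpace ℝ (Fin D)) (w2 : Fin H → ℝ)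
    (hw1 : ∀ h c, w1 h c =
      w2 h • ∑ γ ∈ Finset.univ.filter (fun γ : Fin H → Fin C => γ h = c), φ γ)
    (hw2 : ∀ h, w2 h = ∑ c,
      ⟪w1 h c, ∑ γ ∈ Finset.univ.filter (fun γ : Fin H → Fin C => γ h = c), φ γ⟫)
    (ζ : Fin H → Fin C → EuclideanSpace ℝ (Fin D))
    (hζ : ∀ h c, ζ h c = w2 h • w1 h c) :
    ∀ h c, ζ h c = Real.sqrt (∑ c', ‖ζ h c'‖ ^ 2) •
      ∑ γ ∈ Finset.univ.filter (fun γ : Fin H → Fin C => γ h = c), φ γ :=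
  gln_kkt_transfer_forward_general H C D φ w1 w2 hw1 hw2 ζ hζ
end

section
/- (GLN norm formula for H = C = 2) Let β₁₁, β₁₂, β₂₁ ∈ ℝ^D and β₂₂ := β₁₂ + β₂₁ − β₁₁. Define M as the infimum of √(‖ζ₁₁‖₂² + ‖ζ₁₂‖₂²) + √(‖ζ₂₁‖₂² + ‖ζ₂₂‖₂²) over all ζ₁₁, ζ₁₂, ζ₂₁, ζ₂₂ ∈ ℝ^D satisfying β_{ij} = ζ_{1i} + ζ_{2j} for all i, j ∈ {1,2}. Then the infimum is attained and 2M² = (‖β₁₁ − β₁₂‖₂ + ‖β₁₁ − β₂₁‖₂)² + ‖β₁₂ + β₂₁‖₂². -/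
/-!
By the parallelogram law, `√(‖x‖² + ‖y‖²)` is the root mean square of `‖x + y‖` and `‖x - y‖`.
For a realization, `β₁₁ - β₂₁ = ζ₁₁ - ζ₁₂`, `β₁₁ - β₁₂ = ζ₂₁ - ζ₂₂` and
`β₁₂ + β₂₁ = (ζ₁₁ + ζ₁₂) + (ζ₂₁ + ζ₂₂)`, so the cost is a sum of two root mean squares.
Minkowski's inequality for the root mean square and the triangle inequality bound it below by
`rms ‖β₁₂ + β₂₁‖ (‖β₁₁ - β₁₂‖ + ‖β₁₁ - β₂₁‖)`, and equality holds when `ζ₁₁ + ζ₁₂` and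
`ζ₂₁ + ζ₂₂` are the multiples of `β₁₂ + β₂₁` in the ratio `‖β₁₁ - β₂₁‖ : ‖β₁₁ - β₁₂‖`.
-/

open Real

noncomputable def rms (p q : ℝ) : ℝ := √((p ^ 2 + q ^ 2) / 2)

lemma two_mul_rms_sq (p q : ℝ) : 2 * rms p q ^ 2 = p ^ 2 + q ^ 2 := by
  rw [rms, sq_sqrt (by positivity)]
  ring

lemma rms_eq_norm_div_sqrt_two (p q : ℝ) : rms p q = ‖!₂[p, q]‖ / √2 := by
  rw [rms, sqrt_div' _ zero_le_two]
  simp [EuclideanSpace.norm_eq, Fin.sum_univ_two]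

lemma rms_add_le (p q r s : ℝ) : rms (p + r) (q + s) ≤ rms p q + rms r s := by
  simp only [rms_eq_norm_div_sqrt_two, ← add_div]
  gcongr
  calc ‖!₂[p + r, q + s]‖ = ‖!₂[p, q] + !₂[r, s]‖ := by congr 1; ext i; fin_cases i <;> rfl
    _ ≤ ‖!₂[p, q]‖ + ‖!₂[r, s]‖ := norm_add_le _ _

lemma rms_le_rms_left {p p' : ℝ} (hp : 0 ≤ p) (h : p ≤ p') (q : ℝ) : rms p q ≤ rms p' q := by
  unfold rms
  gcongr

lemma rms_mul_mul {t : ℝ} (ht : 0 ≤ t) (p q : ℝ) : rms (t * p) (t * q) = t * rms p q := by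
  rw [rms, rms, ← sqrt_sq ht, ← sqrt_mul (sq_nonneg t), sqrt_sq ht]
  ring_nf

lemma exists_mem_Icc_mul_add_eq {p q : ℝ} (hp : 0 ≤ p) (hq : 0 ≤ q) :
    ∃ t ∈ Set.Icc (0 : ℝ) 1, t * (p + q) = q ∧ (1 - t) * (p + q) = p := by
  rcases (add_nonneg hp hq).eq_or_lt with hpq | hpq
  · refine ⟨0, by simp, by linarith, by linarith⟩
  · refine ⟨q / (p + q), ⟨by positivity, div_le_one_of_le₀ (by linarith) hpq.le⟩, ?_, ?_⟩
    · field_simp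
    · field_simp
      ring

section InnerProductSpace

variable {E : Type*} [NormedAddCommGroup E] [InnerProductSpace ℝ E]

lemma sqrt_norm_sq_add_norm_sq (x y : E) : √(‖x‖ ^ 2 + ‖y‖ ^ 2) = rms ‖x + y‖ ‖x - y‖ := by
  rw [rms, parallelogram_law_with_norm ℝ x y]
  ring_nf

lemma rms_norm_le_sqrt_add_sqrt (x y z w : E) :
    rms ‖(x + y) + (z + w)‖ (‖x - y‖ + ‖z - w‖) ≤
      √(‖x‖ ^ 2 + ‖y‖ ^ 2) + √(‖z‖ ^ 2 + ‖w‖ ^ 2) := by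
  rw [sqrt_norm_sq_add_norm_sq, sqrt_norm_sq_add_norm_sq]
  calc rms ‖(x + y) + (z + w)‖ (‖x - y‖ + ‖z - w‖)
      ≤ rms (‖x + y‖ + ‖z + w‖) (‖x - y‖ + ‖z - w‖) :=
        rms_le_rms_left (norm_nonneg _) (norm_add_le _ _) _
    _ ≤ rms ‖x + y‖ ‖x - y‖ + rms ‖z + w‖ ‖z - w‖ := rms_add_le _ _ _ _

def glnCosts (β11 β12 β21 β22 : E) : Set ℝ :=
  {v : ℝ | ∃ ζ11 ζ12 ζ21 ζ22 : E,
    β11 = ζ11 + ζ21 ∧ β12 = ζ11 + ζ22 ∧ β21 = ζ12 + ζ21 ∧ β22 = ζ12 + ζ22 ∧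
    v = √(‖ζ11‖ ^ 2 + ‖ζ12‖ ^ 2) + √(‖ζ21‖ ^ 2 + ‖ζ22‖ ^ 2)}

lemma rms_le_of_mem_glnCosts {β11 β12 β21 β22 : E} {v : ℝ} (hv : v ∈ glnCosts β11 β12 β21 β22) :
    rms ‖β12 + β21‖ (‖β11 - β12‖ + ‖β11 - β21‖) ≤ v := by
  obtain ⟨ζ11, ζ12, ζ21, ζ22, rfl, rfl, rfl, -, rfl⟩ := hv
  calc _ = rms ‖(ζ11 + ζ12) + (ζ21 + ζ22)‖ (‖ζ11 - ζ12‖ + ‖ζ21 - ζ22‖) := by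
        rw [add_comm ‖ζ11 - ζ12‖]
        congr 2 <;> [abel; (congr 1; abel); (congr 1; abel)]
    _ ≤ _ := rms_norm_le_sqrt_add_sqrt ζ11 ζ12 ζ21 ζ22

lemma rms_mem_glnCosts {β11 β12 β21 β22 : E} (hβ22 : β22 = β12 + β21 - β11) :
    rms ‖β12 + β21‖ (‖β11 - β12‖ + ‖β11 - β21‖) ∈ glnCosts β11 β12 β21 β22 := by
  set a := β11 - β12
  set b := β11 - β21
  set c := β12 + β21
  obtain ⟨t, ⟨ht₀, ht₁⟩, hb, ha⟩ := exists_mem_Icc_mul_add_eq (norm_nonneg a) (norm_nonneg b)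
  have unit_cost (s : ℝ) (hs : 0 ≤ s) (d : E) (hd : ‖d‖ = s * (‖a‖ + ‖b‖)) :
      √(‖(2 : ℝ)⁻¹ • (s • c + d)‖ ^ 2 + ‖(2 : ℝ)⁻¹ • (s • c - d)‖ ^ 2) =
        s * rms ‖c‖ (‖a‖ + ‖b‖) := by
    have hsc : ‖s • c‖ = s * ‖c‖ := by rw [norm_smul, norm_of_nonneg hs]
    rw [sqrt_norm_sq_add_norm_sq, ← rms_mul_mul hs, ← hd, ← hsc]
    congr 2 <;> module
  refine ⟨(2 : ℝ)⁻¹ • (t • c + b), (2 : ℝ)⁻¹ • (t • c - b),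
    (2 : ℝ)⁻¹ • ((1 - t) • c + a), (2 : ℝ)⁻¹ • ((1 - t) • c - a),
    by module, by module, by module, by rw [hβ22]; module, ?_⟩
  rw [unit_cost t ht₀ b hb.symm, unit_cost (1 - t) (by linarith) a ha.symm]
  ring

end InnerProductSpace

/-- **GLN norm formula for `H = C = 2`.** The group-lasso infimum over decompositions
`β_{ij} = ζ_{1i} + ζ_{2j}` is attained at some `M` with
`2M² = (‖β₁₁ − β₁₂‖ + ‖β₁₁ − β₂₁‖)² + ‖β₁₂ + β₂₁‖²`. -/
theorem gln_norm_formula_two_two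
    (D : ℕ) (β11 β12 β21 β22 : EuclideanSpace ℝ (Fin D))
    (hβ22 : β22 = β12 + β21 - β11) :
    ∃ M : ℝ,
      IsLeast {v : ℝ | ∃ ζ11 ζ12 ζ21 ζ22 : EuclideanSpace ℝ (Fin D),
          β11 = ζ11 + ζ21 ∧ β12 = ζ11 + ζ22 ∧ β21 = ζ12 + ζ21 ∧ β22 = ζ12 + ζ22 ∧
          v = Real.sqrt (‖ζ11‖ ^ 2 + ‖ζ12‖ ^ 2) + Real.sqrt (‖ζ21‖ ^ 2 + ‖ζ22‖ ^ 2)} M ∧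
      2 * M ^ 2 = (‖β11 - β12‖ + ‖β11 - β21‖) ^ 2 + ‖β12 + β21‖ ^ 2 := by
  refine ⟨rms ‖β12 + β21‖ (‖β11 - β12‖ + ‖β11 - β21‖),
    ⟨rms_mem_glnCosts hβ22, fun _ hv => rms_le_of_mem_glnCosts hv⟩, ?_⟩
  rw [two_mul_rms_sq, add_comm]
end

section
/- (Equivalence of the two GLN norm expressions for H = C = 2) Let β₁₁, β₁₂, β₂₁ ∈ ℝ^D and β₂₂ := β₁₂ + β₂₁ − β₁₁. Then (‖β₁₁ − β₁₂‖₂ + ‖β₁₁ − β₂₁‖₂)² + ‖β₁₂ + β₂₁‖₂² = Σ_{i,j ∈ {1,2}} ‖β_{ij}‖₂² + (1/2) Σ_{i,j ∈ {1,2}} ‖β_{ij} − β_{īj}‖₂ · ‖β_{ij} − β_{ij̄}‖₂, where ī := 3 − i and j̄ := 3 − j. -/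
/-!
Under the constraint `β₂₂ = β₁₂ + β₂₁ − β₁₁` every difference in the second sum equals
`±(β₁₁ − β₁₂)` or `±(β₁₁ − β₂₁)`, so that sum is `4 ‖β₁₁ − β₁₂‖ ‖β₁₁ − β₂₁‖` and cancels the
cross term of the square. What remains is an identity between squared norms, proved by
expanding inner products.
-/

theorem norm_sub_sq_add_norm_sub_sq_add_norm_add_sq {E : Type*} [NormedAddCommGroup E]
    [InnerProductSpace ℝ E] (x y z : E) :
    ‖x - y‖ ^ 2 + ‖x - z‖ ^ 2 + ‖y + z‖ ^ 2 = ‖x‖ ^ 2 + ‖y‖ ^ 2 + ‖z‖ ^ 2 + ‖y + z - x‖ ^ 2 := by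
  rw [norm_sub_sq_real, norm_sub_sq_real, norm_sub_sq_real, norm_add_sq_real, inner_add_left,
    real_inner_comm y x, real_inner_comm z x]
  ring

/-- **Equivalence of the two GLN norm expressions for `H = C = 2`.** Under the equivariance
constraint `β₂₂ = β₁₂ + β₂₁ − β₁₁`,
`(‖β₁₁ − β₁₂‖ + ‖β₁₁ − β₂₁‖)² + ‖β₁₂ + β₂₁‖²
  = Σ_{ij} ‖β_{ij}‖² + ½ Σ_{ij} ‖β_{ij} − β_{īj}‖·‖β_{ij} − β_{ij̄}‖`. -/
theorem gln_norm_expressions_equivalent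
    (D : ℕ) (β11 β12 β21 β22 : EuclideanSpace ℝ (Fin D))
    (hβ22 : β22 = β12 + β21 - β11) :
    (‖β11 - β12‖ + ‖β11 - β21‖) ^ 2 + ‖β12 + β21‖ ^ 2 =
      (‖β11‖ ^ 2 + ‖β12‖ ^ 2 + ‖β21‖ ^ 2 + ‖β22‖ ^ 2) +
      (1 / 2) * (‖β11 - β21‖ * ‖β11 - β12‖ + ‖β12 - β22‖ * ‖β12 - β11‖ +
        ‖β21 - β11‖ * ‖β21 - β22‖ + ‖β22 - β12‖ * ‖β22 - β21‖) := by
  subst hβ22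
  have h12 : ‖β12 - (β12 + β21 - β11)‖ = ‖β11 - β21‖ := by congr 1; abel
  have h21 : ‖β21 - (β12 + β21 - β11)‖ = ‖β11 - β12‖ := by congr 1; abel
  have h22_12 : ‖β12 + β21 - β11 - β12‖ = ‖β11 - β21‖ := by rw [← norm_neg]; congr 1; abel
  have h22_21 : ‖β12 + β21 - β11 - β21‖ = ‖β11 - β12‖ := by rw [← norm_neg]; congr 1; abel
  rw [h12, h21, h22_12, h22_21, norm_sub_rev β12 β11, norm_sub_rev β21 β11]
  linear_combination norm_sub_sq_add_norm_sub_sq_add_norm_add_sq β11 β12 β21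
end

section
/- (Gradient direction reduction to the exponential loss) Let ℓ be an exponential-like loss with tail constants c, a, μ₊, μ₋, u₊, u₋, and let (x⁽ⁿ⁾, y⁽ⁿ⁾), n = 1,…,N, be a dataset in ℝ^D × {−1,1}. For β ∈ ℝ^D define L(β) = Σ_n ℓ(y⁽ⁿ⁾⟨β, x⁽ⁿ⁾⟩) and L̃(β) = Σ_n c·exp(−a y⁽ⁿ⁾⟨β, x⁽ⁿ⁾⟩). Let (β⁽ᵗ⁾) be a sequence such that m_n⁽ᵗ⁾ := y⁽ⁿ⁾⟨β⁽ᵗ⁾, x⁽ⁿ⁾⟩ → ∞ for every n, and suppose there exists ε > 0 such that for all sufficiently large t, ‖∇L̃(β⁽ᵗ⁾)‖₂ ≥ ε Σ_n c·exp(−a m_n⁽ᵗ⁾)‖x⁽ⁿ⁾‖₂. Then ‖∇L(β⁽ᵗ⁾)/‖∇L(β⁽ᵗ⁾)‖₂ − ∇L̃(β⁽ᵗ⁾)/‖∇L̃(β⁽ᵗ⁾)‖₂‖₂ → 0; in particular, −∇L(β⁽ᵗ⁾)/‖∇L(β⁽ᵗ⁾)‖₂ converges to a vector ẑ if and only if −∇L̃(β⁽ᵗ⁾)/‖∇L̃(β⁽ᵗ⁾)‖₂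 converges to ẑ. -/
/-!
The tail bounds give `l' u = -c e^{-a u} (1 + o(1))` as `u → ∞`. Once all margins diverge, the
gradients of `L` and `a⁻¹ • Ltil` therefore differ by `o(∑ₙ c e^{-a mₙ} ‖xₙ‖)`, which the
non-degeneracy hypothesis turns into `o(‖∇Ltil‖)`. Two vectors whose difference is small
compared to one of them point in asymptotically the same direction.
-/

open Filter Finset RealInnerProductSpace

noncomputable section

/-- A loss `l : ℝ → ℝ` is *exponential-like with tail constants* `c a μp μm up um` if it is
monotonically decreasing, differentiable, tends to `0` at `+∞`, has a Lipschitz derivative,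
the constants are positive, and `-l'` has a tight exponential tail with these constants. -/
def IsExpLikeWith (l : ℝ → ℝ) (c a μp μm up um : ℝ) : Prop :=
  Antitone l ∧ Differentiable ℝ l ∧ Tendsto l atTop (nhds 0) ∧
  (∃ K : NNReal, LipschitzWith K (deriv l)) ∧
  0 < c ∧ 0 < a ∧ 0 < μp ∧ 0 < μm ∧ 0 < up ∧ 0 < um ∧
  (∀ u, up < u → -deriv l u ≤ c * (1 + Real.exp (-μp * u)) * Real.exp (-a * u)) ∧
  (∀ u, um < u → c * (1 - Real.exp (-μm * u)) * Real.exp (-a * u) ≤ -deriv l u)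

open Asymptotics NormedSpace Topology

section Asymptotics

variable {α : Type*} {l : Filter α}

theorem tendsto_nhds_iff_of_tendsto_sub_nhds_zero {E : Type*} [NormedAddCommGroup E]
    {f g : α → E} {z : E} (h : Tendsto (fun t => f t - g t) l (𝓝 0)) :
    Tendsto f l (𝓝 z) ↔ Tendsto g l (𝓝 z) :=
  ⟨fun hf => by simpa using hf.sub h, fun hg => by simpa using hg.add h⟩

theorem isBigO_of_eventually_const_mul_le {E : Type*} [NormedAddCommGroup E] {f : α → ℝ}
    {g : α → E} (hf : ∀ t, 0 ≤ f t) {ε : ℝ} (hε : 0 < ε) (h : ∀ᶠ t in l, ε * f t ≤ ‖g t‖) :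
    f =O[l] g :=
  IsBigO.of_bound ε⁻¹ <| h.mono fun t ht => by
    rwa [Real.norm_of_nonneg (hf t), inv_mul_eq_div, le_div_iff₀ hε, mul_comm]

theorem isLittleO_sum_smul {ι E : Type*} [Fintype ι] [NormedAddCommGroup E] [NormedSpace ℝ E]
    {e g : ι → α → ℝ} (z : ι → E) (hg : ∀ i t, 0 ≤ g i t)
    (he : ∀ i, e i =o[l] g i) :
    (fun t => ∑ i, e i t • z i) =o[l] fun t => ∑ i, g i t * ‖z i‖ := by
  refine IsLittleO.fun_sum fun i _ => ?_
  refine ((he i).smul_isBigO (isBigO_norm_right.2 (isBigO_refl (fun _ => z i) l))).trans_isBigO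
    (isBigO_of_le _ fun t => ?_)
  have hnonneg : ∀ j, 0 ≤ g j t * ‖z j‖ := fun j => mul_nonneg (hg j t) (norm_nonneg _)
  rw [smul_eq_mul, Real.norm_of_nonneg (hnonneg i),
    Real.norm_of_nonneg (sum_nonneg fun j _ => hnonneg j)]
  exact single_le_sum (fun j _ => hnonneg j) (mem_univ i)

end Asymptotics

namespace NormedSpace

variable {V : Type*} [NormedAddCommGroup V] [NormedSpace ℝ V]

theorem norm_normalize_le_one (u : V) : ‖normalize u‖ ≤ 1 := by
  by_cases hu : u = 0
  · simp [hu]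
  · exact (norm_normalize hu).le

-- Multiplied out by `‖v‖`, the bound needs no case distinction on `v = 0`.
theorem norm_mul_norm_normalize_sub_normalize_le (u v : V) :
    ‖v‖ * ‖normalize u - normalize v‖ ≤ 2 * ‖u - v‖ := by
  have hdecomp : ‖v‖ • (normalize u - normalize v) = (‖v‖ - ‖u‖) • normalize u + (u - v) := by
    rw [smul_sub, norm_smul_normalize, sub_smul, norm_smul_normalize]
    abel
  calc ‖v‖ * ‖normalize u - normalize v‖
      = ‖(‖v‖ - ‖u‖) • normalize u + (u - v)‖ := by
        rw [← hdecomp, norm_smul, norm_norm]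
    _ ≤ |‖v‖ - ‖u‖| * ‖normalize u‖ + ‖u - v‖ := by
        rw [← Real.norm_eq_abs, ← norm_smul]; exact norm_add_le _ _
    _ ≤ ‖u - v‖ * 1 + ‖u - v‖ := by
        gcongr
        · rw [abs_sub_comm]; exact abs_norm_sub_norm_le u v
        · exact norm_normalize_le_one u
    _ = 2 * ‖u - v‖ := by ring

theorem tendsto_normalize_sub_normalize_of_isLittleO {α : Type*} {l : Filter α} {u v : α → V}
    (h : (fun t => u t - v t) =o[l] v) :
    Tendsto (fun t => normalize (u t) - normalize (v t)) l (𝓝 0) := by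
  refine NormedAddGroup.tendsto_nhds_zero.2 fun ε hε => ?_
  filter_upwards [h.def (show 0 < ε / 4 by positivity)] with t ht
  have hbound := norm_mul_norm_normalize_sub_normalize_le (u t) (v t)
  rcases (norm_nonneg (v t)).eq_or_lt with hv | hv
  · have hu : u t = v t := by
      rw [← hv, mul_zero] at ht
      exact sub_eq_zero.1 (norm_le_zero_iff.1 ht)
    simpa [hu] using hε
  · refine lt_of_le_of_lt (le_of_mul_le_mul_left ?_ hv) (half_lt_self hε)
    linarith

end NormedSpace

section Gradient

variable {E : Type*} [NormedAddCommGroup E] [InnerProductSpace ℝ E] [CompleteSpace E]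
  {ι : Type*} [Fintype ι]

theorem hasGradientAt_sum_comp_mul_inner {φ : ℝ → ℝ} (hφ : Differentiable ℝ φ)
    (y : ι → ℝ) (x : ι → E) (γ : E) :
    HasGradientAt (fun β => ∑ i, φ (y i * ⟪β, x i⟫))
      (∑ i, (deriv φ (y i * ⟪γ, x i⟫) * y i) • x i) γ := by
  rw [hasGradientAt_iff_hasFDerivAt, map_sum]
  refine HasFDerivAt.fun_sum fun i _ => ?_
  have hinner : HasFDerivAt (fun β => y i * ⟪β, x i⟫) (y i • innerSL ℝ (x i)) γ := by
    simpa only [innerSL_apply_apply, real_inner_comm (x i)] using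
      ((innerSL ℝ (x i)).hasFDerivAt (x := γ)).const_mul (y i)
  refine ((hφ _).hasDerivAt.comp_hasFDerivAt γ hinner).congr_fderiv ?_
  ext z
  simp [mul_assoc]

end Gradient

theorem IsExpLikeWith.isLittleO_deriv_add_exp {l : ℝ → ℝ} {c a μp μm up um : ℝ}
    (hl : IsExpLikeWith l c a μp μm up um) :
    (fun u => deriv l u + c * Real.exp (-a * u)) =o[atTop] fun u => c * Real.exp (-a * u) := by
  obtain ⟨-, -, -, -, hc, -, hμp, hμm, -, -, htailU, htailL⟩ := hl
  have hdecay : ∀ {μ : ℝ}, 0 < μ → Tendsto (fun u => Real.exp (-μ * u)) atTop (𝓝 0) :=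
    fun hμ => Real.tendsto_exp_atBot.comp (tendsto_id.const_mul_atTop_of_neg (by linarith))
  have hbound : ∀ᶠ u in atTop, ‖deriv l u + c * Real.exp (-a * u)‖ ≤
      (Real.exp (-μp * u) + Real.exp (-μm * u)) * ‖c * Real.exp (-a * u)‖ := by
    filter_upwards [eventually_gt_atTop up, eventually_gt_atTop um] with u hup hum
    have hU := htailU u hup
    have hL := htailL u hum
    have hce : 0 < c * Real.exp (-a * u) := by positivity
    rw [Real.norm_eq_abs, Real.norm_eq_abs, abs_of_pos hce, abs_le]
    constructor <;> nlinarith [Real.exp_pos (-μp * u), Real.exp_pos (-μm * u)]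
  refine isLittleO_iff.2 fun ε hε => ?_
  have hsmall := (by simpa using (hdecay hμp).add (hdecay hμm) :
    Tendsto (fun u => Real.exp (-μp * u) + Real.exp (-μm * u)) atTop (𝓝 0))
  filter_upwards [hbound, hsmall.eventually (ge_mem_nhds hε)] with u hu hε'
  exact hu.trans (by gcongr)

theorem IsExpLikeWith.isLittleO_sum_smul_deriv_add_exp {ι α E : Type*} [Fintype ι]
    [NormedAddCommGroup E] [InnerProductSpace ℝ E] {l : ℝ → ℝ} {c a μp μm up um : ℝ}
    (hl : IsExpLikeWith l c a μp μm up um) (y : ι → ℝ) (x : ι → E) {F : Filter α} {β : α → E}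
    (hmargins : ∀ i, Tendsto (fun t => y i * ⟪β t, x i⟫) F atTop) :
    (fun t => ∑ i, (y i * (deriv l (y i * ⟪β t, x i⟫) +
        c * Real.exp (-a * (y i * ⟪β t, x i⟫)))) • x i) =o[F]
      fun t => ∑ i, c * Real.exp (-a * (y i * ⟪β t, x i⟫)) * ‖x i‖ :=
  have hc : 0 < c := hl.2.2.2.2.1
  isLittleO_sum_smul x (fun i t => by positivity)
    fun i => (hl.isLittleO_deriv_add_exp.comp_tendsto (hmargins i)).const_mul_left (y i)

theorem gradient_direction_reduction_general
    (D N : ℕ)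
    (l : ℝ → ℝ) (c a μp μm up um : ℝ) (hl : IsExpLikeWith l c a μp μm up um)
    (x : Fin N → EuclideanSpace ℝ (Fin D)) (y : Fin N → ℝ)
    (L Ltil : EuclideanSpace ℝ (Fin D) → ℝ)
    (hL : ∀ β, L β = ∑ n, l (y n * ⟪β, x n⟫))
    (hLtil : ∀ β, Ltil β = ∑ n, c * Real.exp (-a * (y n * ⟪β, x n⟫)))
    (β : ℕ → EuclideanSpace ℝ (Fin D))
    (hmargins : ∀ n, Tendsto (fun t => y n * ⟪β t, x n⟫) atTop atTop)
    (hnondeg : ∃ ε : ℝ, 0 < ε ∧ ∀ᶠ t in atTop,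
      ε * ∑ n, c * Real.exp (-a * (y n * ⟪β t, x n⟫)) * ‖x n‖ ≤
        ‖gradient Ltil (β t)‖) :
    Tendsto (fun t =>
        ‖gradient L (β t)‖⁻¹ • gradient L (β t) -
        ‖gradient Ltil (β t)‖⁻¹ • gradient Ltil (β t)) atTop (nhds 0) ∧
    ∀ zhat : EuclideanSpace ℝ (Fin D),
      Tendsto (fun t => ‖gradient L (β t)‖⁻¹ • (-gradient L (β t))) atTop (nhds zhat) ↔
      Tendsto (fun t => ‖gradient Ltil (β t)‖⁻¹ • (-gradient Ltil (β t))) atTop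
        (nhds zhat) := by
  have ⟨_, hdiff, _, _, hc, ha, _⟩ := hl
  have hexp : ∀ s, HasDerivAt (fun s => c * Real.exp (-a * s)) (-a * (c * Real.exp (-a * s))) s :=
    fun s => (((hasDerivAt_id' s).const_mul (-a)).exp.const_mul c).congr_deriv (by ring)
  have hgradL : ∀ γ, gradient L γ = ∑ n, (deriv l (y n * ⟪γ, x n⟫) * y n) • x n := fun γ => by
    rw [funext hL]; exact (hasGradientAt_sum_comp_mul_inner hdiff y x γ).gradient
  have hgradLtil : ∀ γ, a⁻¹ • gradient Ltil γ =
      ∑ n, (-(c * Real.exp (-a * (y n * ⟪γ, x n⟫))) * y n) • x n := fun γ => by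
    rw [funext hLtil, (hasGradientAt_sum_comp_mul_inner (fun s => (hexp s).differentiableAt)
      y x γ).gradient, smul_sum]
    refine sum_congr rfl fun n _ => ?_
    rw [(hexp _).deriv, smul_smul]
    congr 1
    field_simp
  obtain ⟨ε, hε, hscale⟩ := hnondeg
  have hclose : (fun t => gradient L (β t) - a⁻¹ • gradient Ltil (β t)) =o[atTop]
      fun t => a⁻¹ • gradient Ltil (β t) := by
    refine (isLittleO_const_smul_right (inv_ne_zero ha.ne')).2
      (((hl.isLittleO_sum_smul_deriv_add_exp y x hmargins).congr_left fun t => ?_).trans_isBigO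
        (isBigO_of_eventually_const_mul_le (fun t => sum_nonneg fun n _ => by positivity) hε
          hscale))
    rw [hgradL, hgradLtil, ← sum_sub_distrib]
    refine sum_congr rfl fun n _ => ?_
    rw [← sub_smul]
    congr 1
    ring
  have hdir := tendsto_normalize_sub_normalize_of_isLittleO hclose
  simp only [normalize_smul_of_pos (inv_pos.2 ha)] at hdir
  unfold NormedSpace.normalize at hdir
  refine ⟨hdir, fun zhat => tendsto_nhds_iff_of_tendsto_sub_nhds_zero ?_⟩
  simpa only [smul_neg, neg_sub_neg, neg_sub, neg_zero] using hdir.neg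

/-- **Gradient direction reduction to the exponential loss.** If all margins diverge and the
exponential-loss gradient is not degenerate (bounded below by `ε` times the natural scale),
then the normalized gradients of the exponential-like loss and of the exponential loss
become asymptotically equal; in particular, one converges in direction iff the other does,
and to the same limit. -/
theorem gradient_direction_reduction
    (D N : ℕ)
    (l : ℝ → ℝ) (c a μp μm up um : ℝ) (hl : IsExpLikeWith l c a μp μm up um)
    (x : Fin N → EuclideanSpace ℝ (Fin D)) (y : Fin N → ℝ)
    (hy : ∀ n, y n = 1 ∨ y n = -1)
    (L Ltil : EuclideanSpace ℝ (Fin D) → ℝ)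
    (hL : ∀ β, L β = ∑ n, l (y n * ⟪β, x n⟫))
    (hLtil : ∀ β, Ltil β = ∑ n, c * Real.exp (-a * (y n * ⟪β, x n⟫)))
    (β : ℕ → EuclideanSpace ℝ (Fin D))
    (hmargins : ∀ n, Tendsto (fun t => y n * ⟪β t, x n⟫) atTop atTop)
    (hnondeg : ∃ ε : ℝ, 0 < ε ∧ ∀ᶠ t in atTop,
      ε * ∑ n, c * Real.exp (-a * (y n * ⟪β t, x n⟫)) * ‖x n‖ ≤
        ‖gradient Ltil (β t)‖) :
    Tendsto (fun t =>
        ‖gradient L (β t)‖⁻¹ • gradient L (β t) -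
        ‖gradient Ltil (β t)‖⁻¹ • gradient Ltil (β t)) atTop (nhds 0) ∧
    ∀ zhat : EuclideanSpace ℝ (Fin D),
      Tendsto (fun t => ‖gradient L (β t)‖⁻¹ • (-gradient L (β t))) atTop (nhds zhat) ↔
      Tendsto (fun t => ‖gradient Ltil (β t)‖⁻¹ • (-gradient Ltil (β t))) atTop
        (nhds zhat) :=
  gradient_direction_reduction_general D N l c a μp μm up um hl x y L Ltil hL hLtil β hmargins
    hnondeg

end
end

section
/- (Equivalence of the weight-space and predictor-space margin problems for two-layer GLNs) Let (x⁽ⁿ⁾, y⁽ⁿ⁾, γ⁽ⁿ⁾), n = 1,…,N, be a dataset with x⁽ⁿ⁾ ∈ ℝ^D, y⁽ⁿ⁾ ∈ {−1,1}, γ⁽ⁿ⁾ ∈ {1,…,C}^H. Then the infimum of ‖w⁽¹⁾‖₂² + ‖w⁽²⁾‖₂² over all w⁽¹⁾ ∈ ℝ^{H×C×D}, w⁽²⁾ ∈ ℝ^H satisfying y⁽ⁿ⁾⟨Σ_{h=1}^H w⁽²⁾_h w⁽¹⁾_{h,γ⁽ⁿ⁾_h}, x⁽ⁿ⁾⟩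 ≥ 1 for all n equals the infimum of 2 Σ_{h=1}^H ‖ζ_h‖₂ over all ζ ∈ ℝ^{H×C×D} satisfying y⁽ⁿ⁾⟨Σ_{h=1}^H ζ_{h,γ⁽ⁿ⁾_h}, x⁽ⁿ⁾⟩ ≥ 1 for all n (with both infima equal to +∞ if the constraints are infeasible). -/
open Finset RealInnerProductSpace
open scoped ENNReal

/-! Only the products `ζ_h = w⁽²⁾_h w⁽¹⁾_h` enter the constraints, and each block is a
two-factor problem: `2 ‖a • u‖ ≤ ‖u‖² + a²` by AM-GM, with equality for the balanced
factorization `a = √‖z‖`, `u = z / √‖z‖` of any `z`. Hence the cheapest weights realizing a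
given `ζ` cost exactly `2 Σ_h ‖ζ_h‖₂`. -/

section Factorization

variable {F : Type*} [NormedAddCommGroup F] [NormedSpace ℝ F]

theorem two_mul_norm_smul_le_norm_sq_add_sq (a : ℝ) (u : F) :
    2 * ‖a • u‖ ≤ ‖u‖ ^ 2 + a ^ 2 := by
  calc 2 * ‖a • u‖ = 2 * |a| * ‖u‖ := by rw [norm_smul, Real.norm_eq_abs, mul_assoc]
    _ ≤ |a| ^ 2 + ‖u‖ ^ 2 := two_mul_le_add_sq _ _
    _ = ‖u‖ ^ 2 + a ^ 2 := by rw [sq_abs, add_comm]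

theorem exists_smul_eq_and_norm_sq_add_sq_eq (z : F) :
    ∃ (a : ℝ) (u : F), a • u = z ∧ ‖u‖ ^ 2 + a ^ 2 = 2 * ‖z‖ := by
  rcases eq_or_ne z 0 with rfl | hz
  · exact ⟨0, 0, smul_zero 0, by simp⟩
  have hnorm : 0 < ‖z‖ := norm_pos_iff.mpr hz
  have hsqrt : 0 < √‖z‖ := Real.sqrt_pos.mpr hnorm
  refine ⟨√‖z‖, (√‖z‖)⁻¹ • z, by rw [smul_smul, mul_inv_cancel₀ hsqrt.ne', one_smul], ?_⟩
  rw [norm_smul, norm_inv, Real.norm_of_nonneg hsqrt.le, mul_pow, inv_pow,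
    Real.sq_sqrt hnorm.le]
  field_simp
  ring

variable {ι : Type*} [Fintype ι]

theorem two_mul_sqrt_sum_norm_smul_sq_le (a : ℝ) (u : ι → F) :
    2 * √(∑ i, ‖a • u i‖ ^ 2) ≤ ∑ i, ‖u i‖ ^ 2 + a ^ 2 := by
  have h := two_mul_norm_smul_le_norm_sq_add_sq a (WithLp.toLp 2 u)
  rwa [PiLp.norm_sq_eq_of_L2, PiLp.norm_eq_of_L2] at h

theorem exists_smul_eq_and_sum_norm_sq_add_sq_eq (z : ι → F) :
    ∃ (a : ℝ) (u : ι → F), a • u = z ∧ ∑ i, ‖u i‖ ^ 2 + a ^ 2 = 2 * √(∑ i, ‖z i‖ ^ 2) := by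
  obtain ⟨a, u, hau, hcost⟩ := exists_smul_eq_and_norm_sq_add_sq_eq (WithLp.toLp 2 z)
  refine ⟨a, WithLp.ofLp u, by rw [← WithLp.ofLp_smul, hau], ?_⟩
  rwa [PiLp.norm_sq_eq_of_L2, PiLp.norm_eq_of_L2] at hcost

end Factorization

theorem gln_margin_problems_equivalent_general
    (H C D N : ℕ)
    (x : Fin N → EuclideanSpace ℝ (Fin D)) (y : Fin N → ℝ)
    (γd : Fin N → Fin H → Fin C) :
    sInf {v : ℝ≥0∞ | ∃ (w1 : Fin H → Fin C → EuclideanSpace ℝ (Fin D)) (w2 : Fin H → ℝ),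
        (∀ n, 1 ≤ y n * ⟪∑ h, w2 h • w1 h (γd n h), x n⟫) ∧
        v = ENNReal.ofReal ((∑ h, ∑ c, ‖w1 h c‖ ^ 2) + ∑ h, (w2 h) ^ 2)} =
    sInf {v : ℝ≥0∞ | ∃ ζ : Fin H → Fin C → EuclideanSpace ℝ (Fin D),
        (∀ n, 1 ≤ y n * ⟪∑ h, ζ h (γd n h), x n⟫) ∧
        v = ENNReal.ofReal (2 * ∑ h, Real.sqrt (∑ c, ‖ζ h c‖ ^ 2))} := by
  apply le_antisymm
  · refine le_sInf ?_
    rintro _ ⟨ζ, hζ, rfl⟩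
    choose w2 w1 hsmul hcost using fun h => exists_smul_eq_and_sum_norm_sq_add_sq_eq (ζ h)
    have hprod : ∀ h c, w2 h • w1 h c = ζ h c := fun h c => congrFun (hsmul h) c
    refine sInf_le ⟨w1, w2, by simpa only [hprod] using hζ, ?_⟩
    rw [← sum_add_distrib, mul_sum]
    simp only [hcost]
  · refine le_sInf ?_
    rintro _ ⟨w1, w2, hw, rfl⟩
    refine le_trans (sInf_le ⟨fun h c => w2 h • w1 h c, hw, rfl⟩) (ENNReal.ofReal_le_ofReal ?_)
    rw [← sum_add_distrib, mul_sum]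
    exact sum_le_sum fun h _ => two_mul_sqrt_sum_norm_smul_sq_le (w2 h) (w1 h)

/-- **Equivalence of the weight-space and predictor-space margin problems for two-layer
GLNs.** The infimum of `‖w⁽¹⁾‖₂² + ‖w⁽²⁾‖₂²` over weights satisfying the margin
constraints equals the infimum of `2 Σ_h ‖ζ_h‖₂` over auxiliary variables satisfying the
margin constraints (both computed in `ℝ≥0∞`, so infeasible problems have value `⊤`). -/
theorem gln_margin_problems_equivalent
    (H C D N : ℕ)
    (x : Fin N → EuclideanSpace ℝ (Fin D)) (y : Fin N → ℝ)
    (hy : ∀ n, y n = 1 ∨ y n = -1) (γd : Fin N → Fin H → Fin C) :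
    sInf {v : ℝ≥0∞ | ∃ (w1 : Fin H → Fin C → EuclideanSpace ℝ (Fin D)) (w2 : Fin H → ℝ),
        (∀ n, 1 ≤ y n * ⟪∑ h, w2 h • w1 h (γd n h), x n⟫) ∧
        v = ENNReal.ofReal ((∑ h, ∑ c, ‖w1 h c‖ ^ 2) + ∑ h, (w2 h) ^ 2)} =
    sInf {v : ℝ≥0∞ | ∃ ζ : Fin H → Fin C → EuclideanSpace ℝ (Fin D),
        (∀ n, 1 ≤ y n * ⟪∑ h, ζ h (γd n h), x n⟫) ∧
        v = ENNReal.ofReal (2 * ∑ h, Real.sqrt (∑ c, ‖ζ h c‖ ^ 2))} :=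
  gln_margin_problems_equivalent_general H C D N x y γd
end
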